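/- Maximal-bucket witness invariant (used in the proof of Theorem 1 to show that rule R2 cannot break the span bound). In every reachable configuration of the bucketing system, every unrevealed collection A contains an allegation a with t_a = Max(A) + 1, and every allegation a ∈ A satisfies t_a ≤ Max(A) + 1. -/
import Mathlib


/-- An allegation: a distinct identifier, a metadata value, and a reveal threshold. -/
structure Allegation where
  id : ℕ
  md : ℕ
  thr : ℕ
deriving DecidableEq

/-- A collection: a finite set of allegations, a finite set of occupied buckets,
and a flag indicating whether the collection has been revealed. -/
structure Collection where
  allegs : Finset Allegation
  buckets : Finset ℕ
  revealed : Bool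
deriving DecidableEq

namespace Collection
/-- `Min(A)`: the least occupied bucket. -/
noncomputable def bmin (A : Collection) : ℕ := sInf (A.buckets : Set ℕ)
/-- `Max(A)`: the greatest occupied bucket. -/
noncomputable def bmax (A : Collection) : ℕ := sSup (A.buckets : Set ℕ)
end Collection

/-- A configuration is a finite set of collections. -/
abbrev Config := Finset Collection

/-- The transition rules R1–R5 of the bucketing algorithm. -/
inductive Step : Config → Config → Prop
  /-- R1 (file): a new allegation `a` (with a fresh identifier and threshold `≥ 2`)
  is added as a fresh unrevealed singleton collection with bucket set `{t_a - 1}`. -/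
  | file (C : Config) (a : Allegation)
      (hthr : 2 ≤ a.thr)
      (hfresh : ∀ B ∈ C, ∀ b ∈ B.allegs, b.id ≠ a.id) :
      Step C (insert ⟨{a}, {a.thr - 1}, false⟩ C)
  /-- R2 (copy): if `A` is unrevealed, `Min(A) ≥ 1` and every `a ∈ A` has
  `t_a < Min(A) + |A|`, then `Min(A) - 1` is added to `buckets(A)`. -/
  | copy (C : Config) (A : Collection) (hA : A ∈ C)
      (hrev : A.revealed = false)
      (hmin : 1 ≤ A.bmin)
      (hthr : ∀ a ∈ A.allegs, a.thr < A.bmin + A.allegs.card) :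
      Step C (insert ⟨A.allegs, insert (A.bmin - 1) A.buckets, false⟩ (C.erase A))
  /-- R3 (coalesce): two distinct unrevealed collections with overlapping bucket
  sets and pairwise matching allegations coalesce. -/
  | coalesce (C : Config) (A B : Collection)
      (hA : A ∈ C) (hB : B ∈ C) (hne : A ≠ B)
      (hArev : A.revealed = false) (hBrev : B.revealed = false)
      (hover : (A.buckets ∩ B.buckets).Nonempty)
      (hmatch : ∀ a ∈ A.allegs, ∀ b ∈ B.allegs, a.md = b.md) :
      Step C (insert ⟨A.allegs ∪ B.allegs, A.buckets ∪ B.buckets, false⟩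
        ((C.erase A).erase B))
  /-- R4 (reveal): an unrevealed collection occupying bucket 0 is marked revealed;
  its bucket set becomes `{0, 1, …, |A|}`. -/
  | reveal (C : Config) (A : Collection) (hA : A ∈ C)
      (hrev : A.revealed = false) (h0 : (0 : ℕ) ∈ A.buckets) :
      Step C (insert ⟨A.allegs, Finset.range (A.allegs.card + 1), true⟩ (C.erase A))
  /-- R5 (absorb): a revealed collection absorbs an unrevealed one with overlapping
  bucket set and matching allegations; the result is revealed with bucket set
  `{0, 1, …, |A ∪ B|}`. -/
  | absorb (C : Config) (A B : Collection)
      (hA : A ∈ C) (hB : B ∈ C)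
      (hArev : A.revealed = true) (hBrev : B.revealed = false)
      (hover : (A.buckets ∩ B.buckets).Nonempty)
      (hmatch : ∀ a ∈ A.allegs, ∀ b ∈ B.allegs, a.md = b.md) :
      Step C (insert ⟨A.allegs ∪ B.allegs,
        Finset.range ((A.allegs ∪ B.allegs).card + 1), true⟩
        ((C.erase A).erase B))

/-- A configuration is reachable if it is obtained from the empty configuration
by finitely many applications of R1–R5. -/
def Reachable (C : Config) : Prop := Relation.ReflTransGen Step ∅ C

/-- A configuration is saturated if none of the rules R2–R5 is applicable. -/
def Saturated (C : Config) : Prop :=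
  (¬ ∃ A ∈ C, A.revealed = false ∧ 1 ≤ A.bmin ∧
      ∀ a ∈ A.allegs, a.thr < A.bmin + A.allegs.card) ∧
  (¬ ∃ A ∈ C, ∃ B ∈ C, A ≠ B ∧ A.revealed = false ∧ B.revealed = false ∧
      (A.buckets ∩ B.buckets).Nonempty ∧
      ∀ a ∈ A.allegs, ∀ b ∈ B.allegs, a.md = b.md) ∧
  (¬ ∃ A ∈ C, A.revealed = false ∧ (0 : ℕ) ∈ A.buckets) ∧
  (¬ ∃ A ∈ C, ∃ B ∈ C, A.revealed = true ∧ B.revealed = false ∧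
      (A.buckets ∩ B.buckets).Nonempty ∧
      ∀ a ∈ A.allegs, ∀ b ∈ B.allegs, a.md = b.md)

/-- The set of all allegations filed so far (the union of all collections). -/
def filedAllegs (C : Config) : Finset Allegation := C.sup Collection.allegs

lemma le_bmax_aux {s : Finset ℕ} {x : ℕ} (hx : x ∈ s) : x ≤ sSup (s : Set ℕ) :=
  le_csSup s.bddAbove (by exact_mod_cast hx)

lemma sSup_coe_insert (x : ℕ) {s : Finset ℕ} (h : s.Nonempty) :
    sSup ((insert x s : Finset ℕ) : Set ℕ) = x ⊔ sSup (s : Set ℕ) := by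
  rw [Finset.coe_insert, csSup_insert s.bddAbove (by exact_mod_cast h)]

lemma sSup_coe_union {s t : Finset ℕ} (hs : s.Nonempty) (ht : t.Nonempty) :
    sSup ((s ∪ t : Finset ℕ) : Set ℕ) = sSup (s : Set ℕ) ⊔ sSup (t : Set ℕ) := by
  rw [Finset.coe_union,
    csSup_union s.bddAbove (by exact_mod_cast hs) t.bddAbove (by exact_mod_cast ht)]

/-- The full invariant used for the induction. -/
def BInv (C : Config) : Prop :=
  ∀ A ∈ C, A.buckets.Nonempty ∧ (A.revealed = false →
    (∃ a ∈ A.allegs, a.thr = A.bmax + 1) ∧ (∀ a ∈ A.allegs, a.thr ≤ A.bmax + 1))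

lemma step_inv {C D : Config} (h : Step C D) (hi : BInv C) : BInv D := by
  cases h with
  | file a hthr hfresh =>
      intro A hA
      rcases Finset.mem_insert.1 hA with rfl | hA
      · refine ⟨⟨a.thr - 1, by simp⟩, fun _ => ?_⟩
        have hb : Collection.bmax ⟨{a}, {a.thr - 1}, false⟩ = a.thr - 1 := by
          simp [Collection.bmax]
        constructor
        · exact ⟨a, by simp, by rw [hb]; omega⟩
        · intro b hb'
          simp only [Finset.mem_singleton] at hb'
          subst hb'; rw [hb]; omega
      · exact hi A hA
  | copy A hA hrev hmin hthr =>
      intro B hB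
      rcases Finset.mem_insert.1 hB with rfl | hB
      · obtain ⟨hne, hwit⟩ := hi A hA
        have hmax : Collection.bmax ⟨A.allegs, insert (A.bmin - 1) A.buckets, false⟩
            = A.bmax := by
          have h1 : A.bmin ≤ A.bmax := by
            have : A.bmin ∈ A.buckets := by
              have := Nat.sInf_mem (s := (A.buckets : Set ℕ)) (by exact_mod_cast hne)
              exact_mod_cast this
            exact le_bmax_aux this
          have : A.bmin - 1 ≤ A.bmax := by omega
          simp only [Collection.bmax, sSup_coe_insert _ hne]
          exact sup_eq_right.2 this
        refine ⟨⟨A.bmin - 1, by simp⟩, fun _ => ?_⟩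
        obtain ⟨⟨a, ha, hath⟩, hall⟩ := hwit hrev
        exact ⟨⟨a, ha, by rw [hmax]; exact hath⟩, fun b hb' => by rw [hmax]; exact hall b hb'⟩
      · exact hi B (Finset.mem_of_mem_erase hB)
  | coalesce A B hA hB hne hArev hBrev hover hmatch =>
      intro X hX
      rcases Finset.mem_insert.1 hX with rfl | hX
      · obtain ⟨hAne, hAwit⟩ := hi A hA
        obtain ⟨hBne, hBwit⟩ := hi B hB
        obtain ⟨⟨a, ha, hath⟩, hAall⟩ := hAwit hArev
        obtain ⟨⟨b, hb, hbth⟩, hBall⟩ := hBwit hBrev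
        have hmax : Collection.bmax ⟨A.allegs ∪ B.allegs, A.buckets ∪ B.buckets, false⟩
            = A.bmax ⊔ B.bmax := by
          simp only [Collection.bmax, sSup_coe_union hAne hBne]
        refine ⟨by simp [Finset.Nonempty.mono Finset.subset_union_left hAne], fun _ => ?_⟩
        constructor
        · rcases le_total A.bmax B.bmax with hle | hle
          · exact ⟨b, Finset.mem_union_right _ hb, by rw [hmax, sup_eq_right.2 hle]; exact hbth⟩
          · exact ⟨a, Finset.mem_union_left _ ha, by rw [hmax, sup_eq_left.2 hle]; exact hath⟩
        · intro c hc
          rw [hmax]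
          rcases Finset.mem_union.1 hc with hc | hc
          · exact le_trans (hAall c hc) (Nat.succ_le_succ le_sup_left)
          · exact le_trans (hBall c hc) (Nat.succ_le_succ le_sup_right)
      · exact hi X (Finset.mem_of_mem_erase (Finset.mem_of_mem_erase hX))
  | reveal A hA hrev h0 =>
      intro B hB
      rcases Finset.mem_insert.1 hB with rfl | hB
      · exact ⟨⟨0, by simp⟩, by simp⟩
      · exact hi B (Finset.mem_of_mem_erase hB)
  | absorb A B hA hB hArev hBrev hover hmatch =>
      intro X hX
      rcases Finset.mem_insert.1 hX with rfl | hX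
      · exact ⟨⟨0, by simp⟩, by simp⟩
      · exact hi X (Finset.mem_of_mem_erase (Finset.mem_of_mem_erase hX))

lemma reachable_inv {C : Config} (h : Reachable C) : BInv C := by
  induction h with
  | refl => intro A hA; simp at hA
  | tail _ hstep ih => exact step_inv hstep ih

/-- **Maximal-bucket witness invariant.** In every reachable configuration, every
unrevealed collection `A` contains an allegation with `t_a = Max(A) + 1`, and
every allegation `a ∈ A` satisfies `t_a ≤ Max(A) + 1`. -/
theorem bucketing_max_witness (C : Config) (hreach : Reachable C) :
    ∀ A ∈ C, A.revealed = false →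
      (∃ a ∈ A.allegs, a.thr = A.bmax + 1) ∧
      (∀ a ∈ A.allegs, a.thr ≤ A.bmax + 1) := by
  intro A hA hrev
  exact (reachable_inv hreach A hA).2 hrev
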